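/- Let T > 0, N a positive integer, τ = T/N, t_k = kτ, and fix α ∈ (0,1). Then for every n with 2 ≤ n ≤ N, the L1⁺ coefficients of order α satisfy a_2^{(n)}(α) > a_3^{(n)}(α) > ⋯ > a_n^{(n)}(α) > 0; that is, for all 2 ≤ j < j′ ≤ n one has a_j^{(n)}(α) > a_{j′}^{(n)}(α) > 0. -/

import Mathlib

/-- The kernel `ω_{1-β}(t) = t^{-β} / Γ(1-β)`. -/
noncomputable def omegaK (β t : ℝ) : ℝ := t ^ (-β) / Real.Gamma (1 - β)

/-- The L1⁺ coefficient `a_j^{(n)}(α)` on the uniform mesh `t_k = k τ`: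
`a_{n-k+1}^{(n)}(α) = (1/τ²) ∫_{t_{n-1}}^{t_n} ∫_{t_{k-1}}^{min(t, t_k)} ω_{1-α}(t-s) ds dt`,
expressed with `j = n - k + 1`, i.e. `k = n - j + 1`. -/
noncomputable def acoef (τ α : ℝ) (n j : ℕ) : ℝ :=
  (1 / τ ^ 2) * ∫ t in (((n : ℝ) - 1) * τ)..((n : ℝ) * τ),
      ∫ s in (((n : ℝ) - (j : ℝ)) * τ)..(min t (((n : ℝ) - (j : ℝ) + 1) * τ)),
        omegaK α (t - s)

/-!
Both integrals in `a_j^{(n)}` can be computed in closed form: for `j ≥ 2` the coefficient is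
`τ^{-α} / (Γ(1-α)(1-α)(2-α))` times the central second difference of `x ↦ x^{2-α}` at `j - 1`.
This second difference is positive because `x^{2-α}` is strictly convex, and it is strictly
decreasing because its derivative is `(2-α)` times the second difference of the strictly concave
`x^{1-α}`.
-/

open Real Set intervalIntegral

noncomputable def rpowSecondDiff (p x : ℝ) : ℝ := (x + 1) ^ p - 2 * x ^ p + (x - 1) ^ p

lemma midpoint_sub_one_add_one (x : ℝ) : (1 / 2 : ℝ) • (x - 1) + (1 / 2 : ℝ) • (x + 1) = x := by
  simp only [smul_eq_mul]; ring

lemma rpowSecondDiff_pos {p : ℝ} (hp : 1 < p) {x : ℝ} (hx : 1 ≤ x) : 0 < rpowSecondDiff p x := by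
  have h := (strictConvexOn_rpow hp).2 (x := x - 1) (y := x + 1)
    (by simp only [mem_Ici]; linarith) (by simp only [mem_Ici]; linarith) (by intro h; linarith)
    (by norm_num : (0 : ℝ) < 1 / 2) (by norm_num : (0 : ℝ) < 1 / 2) (by norm_num)
  rw [midpoint_sub_one_add_one] at h
  simp only [smul_eq_mul] at h
  unfold rpowSecondDiff
  linarith

lemma rpowSecondDiff_neg {p : ℝ} (hp0 : 0 < p) (hp1 : p < 1) {x : ℝ} (hx : 1 ≤ x) :
    rpowSecondDiff p x < 0 := by
  have h := (strictConcaveOn_rpow hp0 hp1).2 (x := x - 1) (y := x + 1)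
    (by simp only [mem_Ici]; linarith) (by simp only [mem_Ici]; linarith) (by intro h; linarith)
    (by norm_num : (0 : ℝ) < 1 / 2) (by norm_num : (0 : ℝ) < 1 / 2) (by norm_num)
  rw [midpoint_sub_one_add_one] at h
  simp only [smul_eq_mul] at h
  unfold rpowSecondDiff
  linarith

lemma hasDerivAt_rpowSecondDiff (p : ℝ) {x : ℝ} (hx : 1 < x) :
    HasDerivAt (rpowSecondDiff p) (p * rpowSecondDiff (p - 1) x) x := by
  have d1 := (hasDerivAt_rpow_const (p := p) (Or.inl (by linarith : x + 1 ≠ 0))).comp_add_const x 1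
  have d2 := hasDerivAt_rpow_const (p := p) (Or.inl (by linarith : x ≠ 0))
  have d3 := (hasDerivAt_rpow_const (p := p) (Or.inl (by linarith : x - 1 ≠ 0))).comp_sub_const x 1
  refine ((d1.sub (d2.const_mul 2)).add d3).congr_deriv ?_
  unfold rpowSecondDiff
  ring

lemma continuous_rpowSecondDiff {p : ℝ} (hp : 0 ≤ p) : Continuous (rpowSecondDiff p) := by
  unfold rpowSecondDiff
  fun_prop (disch := exact hp)

lemma rpowSecondDiff_strictAntiOn {p : ℝ} (hp1 : 1 < p) (hp2 : p < 2) :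
    StrictAntiOn (rpowSecondDiff p) (Ici 1) := by
  refine strictAntiOn_of_deriv_neg (convex_Ici 1)
    (continuous_rpowSecondDiff (by linarith)).continuousOn fun x hx => ?_
  rw [interior_Ici] at hx
  rw [(hasDerivAt_rpowSecondDiff p hx).deriv]
  exact mul_neg_of_pos_of_neg (by linarith)
    (rpowSecondDiff_neg (by linarith) (by linarith) (le_of_lt hx))

lemma integral_sub_rpow {r : ℝ} (hr : -1 < r) (t A B : ℝ) :
    ∫ s in A..B, (t - s) ^ r = ((t - A) ^ (r + 1) - (t - B) ^ (r + 1)) / (r + 1) := by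
  rw [integral_comp_sub_left (fun u : ℝ => u ^ r) t, integral_rpow (Or.inl hr)]

lemma integral_integral_sub_rpow {r : ℝ} (hr : -1 < r) (a b A B : ℝ) :
    ∫ t in a..b, ∫ s in A..B, (t - s) ^ r =
      ((b - A) ^ (r + 2) - (a - A) ^ (r + 2) - (b - B) ^ (r + 2) + (a - B) ^ (r + 2)) /
        ((r + 1) * (r + 2)) := by
  have hr1 : 0 ≤ r + 1 := by linarith
  have hcont (c : ℝ) : Continuous fun t : ℝ => (t - c) ^ (r + 1) := by
    fun_prop (disch := exact hr1)
  simp only [integral_sub_rpow hr]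
  rw [intervalIntegral.integral_div,
    integral_sub ((hcont A).intervalIntegrable a b) ((hcont B).intervalIntegrable a b),
    integral_comp_sub_right (fun u : ℝ => u ^ (r + 1)) A,
    integral_comp_sub_right (fun u : ℝ => u ^ (r + 1)) B,
    integral_rpow (Or.inl (by linarith)), integral_rpow (Or.inl (by linarith))]
  have hr2 : r + 1 + 1 = r + 2 := by ring
  have hne1 : r + 1 ≠ 0 := by linarith
  have hne2 : r + 2 ≠ 0 := by linarith
  rw [hr2]
  field_simp
  ring

lemma acoef_eq {τ α : ℝ} (hτ : 0 < τ) (hα : α < 1) (n : ℕ) {j : ℕ} (hj : 2 ≤ j) :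
    acoef τ α n j =
      τ ^ (-α) / (Gamma (1 - α) * ((1 - α) * (2 - α))) * rpowSecondDiff (2 - α) (j - 1) := by
  have hj2 : (2 : ℝ) ≤ j := by exact_mod_cast hj
  -- for `t ≥ t_{n-1} ≥ t_{n-j+1}` the upper limit `min t t_{n-j+1}` is `t_{n-j+1}`
  have hmin : EqOn (fun t => ∫ s in ((n : ℝ) - j) * τ..min t (((n : ℝ) - j + 1) * τ),
        omegaK α (t - s))
      (fun t => (∫ s in ((n : ℝ) - j) * τ..((n : ℝ) - j + 1) * τ, (t - s) ^ (-α)) / Gamma (1 - α))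
      (uIcc (((n : ℝ) - 1) * τ) (n * τ)) := by
    intro t ht
    rw [uIcc_of_le (by nlinarith)] at ht
    simp only [omegaK, intervalIntegral.integral_div]
    rw [min_eq_right (by nlinarith [ht.1])]
  have hscale (k : ℝ) (hk : 0 ≤ k) : (k * τ) ^ (2 - α) = τ ^ 2 * τ ^ (-α) * k ^ (2 - α) := by
    rw [mul_rpow hk hτ.le, show (2 : ℝ) - α = (2 : ℕ) + -α by push_cast; ring,
      rpow_add hτ, rpow_natCast]
    ring
  rw [acoef, integral_congr hmin, intervalIntegral.integral_div,
    integral_integral_sub_rpow (by linarith)]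
  rw [show -α + 2 = 2 - α by ring, show -α + 1 = 1 - α by ring]
  rw [show (n : ℝ) * τ - (n - j) * τ = j * τ by ring,
    show ((n : ℝ) - 1) * τ - (n - j) * τ = (j - 1) * τ by ring,
    show (n : ℝ) * τ - (n - j + 1) * τ = (j - 1) * τ by ring,
    show ((n : ℝ) - 1) * τ - (n - j + 1) * τ = (j - 2) * τ by ring,
    hscale j (by linarith), hscale (j - 1) (by linarith), hscale (j - 2) (by linarith)]
  simp only [rpowSecondDiff, sub_add_cancel, show (j : ℝ) - 1 - 1 = j - 2 by ring]
  have hΓ : Gamma (1 - α) ≠ 0 := (Gamma_pos_of_pos (by linarith)).ne'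
  have h1 : 1 - α ≠ 0 := by linarith
  have h2 : 2 - α ≠ 0 := by linarith
  field_simp
  ring

theorem stmt1 (T : ℝ) (hT : 0 < T) (N : ℕ) (hN : 0 < N) (τ : ℝ) (hτ : τ = T / N)
    (α : ℝ) (hα : α ∈ Set.Ioo (0 : ℝ) 1)
    (n : ℕ) :
    ∀ j j' : ℕ, 2 ≤ j → j < j' → j' ≤ n →
      acoef τ α n j > acoef τ α n j' ∧ acoef τ α n j' > 0 := by
  intro j j' hj hjj' _
  obtain ⟨hα0, hα1⟩ := hα
  have hτ0 : 0 < τ := hτ ▸ div_pos hT (Nat.cast_pos.mpr hN)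
  have hc : 0 < τ ^ (-α) / (Gamma (1 - α) * ((1 - α) * (2 - α))) := by
    have := Gamma_pos_of_pos (by linarith : 0 < 1 - α)
    have : 0 < 1 - α := by linarith
    have : 0 < 2 - α := by linarith
    positivity
  have hj1 : (1 : ℝ) ≤ j - 1 := by
    have : (2 : ℝ) ≤ j := by exact_mod_cast hj
    linarith
  have hjj'1 : (j : ℝ) - 1 < j' - 1 := by
    have : (j : ℝ) < j' := by exact_mod_cast hjj'
    linarith
  rw [acoef_eq hτ0 hα1 n hj, acoef_eq hτ0 hα1 n (hj.trans hjj'.le)]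
  refine ⟨mul_lt_mul_of_pos_left ?_ hc, mul_pos hc (rpowSecondDiff_pos (by linarith) ?_)⟩
  · exact rpowSecondDiff_strictAntiOn (by linarith) (by linarith) (mem_Ici.mpr hj1)
      (mem_Ici.mpr (by linarith)) hjj'1
  · linarith
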